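/- Let 0 < C ≤ 1 and let j_i : Y → X_i (i ∈ I) be a family of nonexpansive, C-expansive maps between complete extended metric spaces, with gluing pseudodistance D on ⊔_i X_i. Then for i ≠ i' in I and points x ∈ X_i, x' ∈ X_{i'} one has D(ι_i x, ι_{i'} x') = inf_{y,y' ∈ Y} ( d_{X_i}(x, j_i y) + D(ι y, ι y') + d_{X_{i'}}(j_{i'} y', x') ). -/

import Mathlib

/-!
A chain from a point `x` of `X i` to a point `x'` of another summand has at least one link, so its
first piece runs from `x` to some `j i y` and its last piece from some `j i' y'` to `x'`; cutting
these two pieces off leaves a chain from `j i y` to `j i' y'`. Conversely, by the triangle inequality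
in `X i` and `X i'`, the end points of a chain from `j i y` to `j i' y'` can be moved to `x` and `x'`
at the cost of `d(x, j i y) + d(j i' y', x')`.
-/

open ENNReal NNReal

/-- The gluing pseudodistance on the disjoint union `Σ i, X i` associated to a family of maps
`j i : Y → X i`: the infimum of `∑ s, d (p s) (q s)` over all finite chains
`p 0 = a, q 0, p 1, q 1, …, p n, q n = b` in which each pair `p s, q s` lies in a single
summand `X (idx s)` and consecutive points `q s`, `p (s+1)` are images of a common point of
`Y` under the corresponding `j`. -/
noncomputable def glueDist {I Y : Type*} {X : I → Type*} [∀ i, EMetricSpace (X i)]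
    (j : ∀ i, Y → X i) (a b : Σ i, X i) : ℝ≥0∞ :=
  sInf {L : ℝ≥0∞ | ∃ (n : ℕ) (idx : Fin (n + 1) → I) (p q : ∀ s, X (idx s)),
    (⟨idx 0, p 0⟩ : Σ i, X i) = a ∧ (⟨idx (Fin.last n), q (Fin.last n)⟩ : Σ i, X i) = b ∧
    (∀ s : Fin n, ∃ y : Y,
      q s.castSucc = j (idx s.castSucc) y ∧ p s.succ = j (idx s.succ) y) ∧
    L = ∑ s, edist (p s) (q s)}

structure GlueChain {I Y : Type*} {X : I → Type*} (j : ∀ i, Y → X i) (a b : Σ i, X i) where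
  n : ℕ
  idx : Fin (n + 1) → I
  p : ∀ s, X (idx s)
  q : ∀ s, X (idx s)
  head : (⟨idx 0, p 0⟩ : Σ i, X i) = a
  last : (⟨idx (Fin.last n), q (Fin.last n)⟩ : Σ i, X i) = b
  link : ∀ s : Fin n, ∃ y : Y, q s.castSucc = j (idx s.castSucc) y ∧ p s.succ = j (idx s.succ) y

namespace GlueChain

variable {I Y : Type*} {X : I → Type*} {j : ∀ i, Y → X i} {a b : Σ i, X i}

noncomputable def cost [∀ i, EDist (X i)] (c : GlueChain j a b) : ℝ≥0∞ :=
  ∑ s, edist (c.p s) (c.q s)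

def withHead (c : GlueChain j a b) (x : X (c.idx 0)) : GlueChain j ⟨c.idx 0, x⟩ b where
  n := c.n
  idx := c.idx
  p := Function.update c.p 0 x
  q := c.q
  head := by rw [Function.update_self]
  last := c.last
  link s := by simpa only [Function.update_of_ne (Fin.succ_ne_zero s)] using c.link s

def withLast (c : GlueChain j a b) (x : X (c.idx (Fin.last c.n))) :
    GlueChain j a ⟨c.idx (Fin.last c.n), x⟩ where
  n := c.n
  idx := c.idx
  p := c.p
  q := Function.update c.q (Fin.last c.n) x
  head := c.head
  last := by rw [Function.update_self]
  link s := by simpa only [Function.update_of_ne (Fin.castSucc_lt_last s).ne] using c.link s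

section EDist

variable [∀ i, EDist (X i)]

theorem cost_eq_edist_head_add (c : GlueChain j a b) :
    c.cost = edist (c.p 0) (c.q 0) + ∑ s : Fin c.n, edist (c.p s.succ) (c.q s.succ) :=
  Fin.sum_univ_succ _

theorem cost_eq_add_edist_last (c : GlueChain j a b) :
    c.cost = ∑ s : Fin c.n, edist (c.p s.castSucc) (c.q s.castSucc) +
      edist (c.p (Fin.last c.n)) (c.q (Fin.last c.n)) :=
  Fin.sum_univ_castSucc _

theorem cost_withHead (c : GlueChain j a b) (x : X (c.idx 0)) :
    (c.withHead x).cost = edist x (c.q 0) + ∑ s : Fin c.n, edist (c.p s.succ) (c.q s.succ) := by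
  simp only [withHead, cost_eq_edist_head_add, Function.update_self, ne_eq, Fin.succ_ne_zero,
    not_false_eq_true, Function.update_of_ne]

theorem cost_withLast (c : GlueChain j a b) (x : X (c.idx (Fin.last c.n))) :
    (c.withLast x).cost =
      ∑ s : Fin c.n, edist (c.p s.castSucc) (c.q s.castSucc) + edist (c.p (Fin.last c.n)) x := by
  simp only [withLast, cost_eq_add_edist_last, ne_eq, Fin.castSucc_ne_last, not_false_eq_true,
    Function.update_of_ne, Function.update_self]

end EDist

variable [∀ i, PseudoEMetricSpace (X i)]

theorem edist_add_cost_withHead (c : GlueChain j a b) :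
    edist (c.p 0) (c.q 0) + (c.withHead (c.q 0)).cost = c.cost := by
  rw [cost_withHead, edist_self, zero_add, cost_eq_edist_head_add]

theorem cost_withLast_add_edist (c : GlueChain j a b) :
    (c.withLast (c.p (Fin.last c.n))).cost + edist (c.p (Fin.last c.n)) (c.q (Fin.last c.n)) =
      c.cost := by
  rw [cost_withLast, edist_self, add_zero, cost_eq_add_edist_last]

end GlueChain

section

variable {I Y : Type*} {X : I → Type*} [∀ i, EMetricSpace (X i)] (j : ∀ i, Y → X i)

theorem glueDist_eq_iInf_cost (a b : Σ i, X i) :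
    glueDist j a b = ⨅ c : GlueChain j a b, c.cost := by
  refine le_antisymm (le_iInf fun c => ?_) (le_sInf ?_)
  · exact sInf_le ⟨c.n, c.idx, c.p, c.q, c.head, c.last, c.link, rfl⟩
  rintro _ ⟨n, idx, p, q, head, last, link, rfl⟩
  exact iInf_le (fun c : GlueChain j a b => c.cost) ⟨n, idx, p, q, head, last, link⟩

theorem glueDist_le_cost {a b : Σ i, X i} (c : GlueChain j a b) : glueDist j a b ≤ c.cost :=
  (glueDist_eq_iInf_cost j a b).trans_le (iInf_le _ c)

theorem glueDist_le_edist_add_glueDist {a : Σ i, X i} (x : X a.1) (b : Σ i, X i) :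
    glueDist j ⟨a.1, x⟩ b ≤ edist x a.2 + glueDist j a b := by
  rw [glueDist_eq_iInf_cost j a, ENNReal.add_iInf]
  refine le_iInf fun c => ?_
  rcases c with ⟨n, idx, p, q, rfl, last, link⟩
  set c : GlueChain j _ b := ⟨n, idx, p, q, rfl, last, link⟩
  calc glueDist j ⟨idx 0, x⟩ b ≤ (c.withHead x).cost := glueDist_le_cost j _
    _ = edist x (q 0) + ∑ s : Fin n, edist (p s.succ) (q s.succ) := c.cost_withHead x
    _ ≤ edist x (p 0) + c.cost := by
      rw [c.cost_eq_edist_head_add, ← add_assoc]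
      exact add_le_add_left (edist_triangle _ _ _) _

theorem glueDist_le_glueDist_add_edist (a : Σ i, X i) {b : Σ i, X i} (x : X b.1) :
    glueDist j a ⟨b.1, x⟩ ≤ glueDist j a b + edist b.2 x := by
  rw [glueDist_eq_iInf_cost j a b, ENNReal.iInf_add]
  refine le_iInf fun c => ?_
  rcases c with ⟨n, idx, p, q, head, rfl, link⟩
  set c : GlueChain j a _ := ⟨n, idx, p, q, head, rfl, link⟩
  calc glueDist j a ⟨idx (Fin.last n), x⟩ ≤ (c.withLast x).cost := glueDist_le_cost j _
    _ = ∑ s : Fin n, edist (p s.castSucc) (q s.castSucc) + edist (p (Fin.last n)) x :=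
      c.cost_withLast x
    _ ≤ c.cost + edist (q (Fin.last n)) x := by
      rw [c.cost_eq_add_edist_last, add_assoc]
      exact add_le_add_right (edist_triangle _ _ _) _

theorem glueDist_eq_iInf_head {a b : Σ i, X i} (h : a.1 ≠ b.1) :
    glueDist j a b = ⨅ y, edist a.2 (j a.1 y) + glueDist j ⟨a.1, j a.1 y⟩ b := by
  refine le_antisymm
    (le_iInf fun y => glueDist_le_edist_add_glueDist j (a := ⟨a.1, j a.1 y⟩) a.2 b) ?_
  rw [glueDist_eq_iInf_cost j a b]
  refine le_iInf fun c => ?_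
  rcases c with ⟨_ | n, idx, p, q, rfl, rfl, link⟩
  · exact absurd rfl h
  obtain ⟨y, hy, -⟩ := link 0
  rw [Fin.castSucc_zero] at hy
  set c : GlueChain j _ _ := ⟨n + 1, idx, p, q, rfl, rfl, link⟩
  refine (iInf_le _ y).trans ?_
  rw [← hy, ← c.edist_add_cost_withHead]
  exact add_le_add_right (glueDist_le_cost j _) _

theorem glueDist_eq_iInf_last {a b : Σ i, X i} (h : a.1 ≠ b.1) :
    glueDist j a b = ⨅ y, glueDist j a ⟨b.1, j b.1 y⟩ + edist (j b.1 y) b.2 := by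
  refine le_antisymm
    (le_iInf fun y => glueDist_le_glueDist_add_edist j a (b := ⟨b.1, j b.1 y⟩) b.2) ?_
  rw [glueDist_eq_iInf_cost j a b]
  refine le_iInf fun c => ?_
  rcases c with ⟨_ | n, idx, p, q, rfl, rfl, link⟩
  · exact absurd rfl h
  obtain ⟨y, -, hy⟩ := link (Fin.last n)
  rw [Fin.succ_last] at hy
  set c : GlueChain j _ _ := ⟨n + 1, idx, p, q, rfl, rfl, link⟩
  refine (iInf_le _ y).trans ?_
  rw [← hy, ← c.cost_withLast_add_edist]
  exact add_le_add_left (glueDist_le_cost j _) _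

end

theorem glue_dist_across_summands {I Y : Type*} {X : I → Type*}
    [∀ i, EMetricSpace (X i)]
    (j : ∀ i, Y → X i) :
    ∀ (i i' : I), i ≠ i' → ∀ (x : X i) (x' : X i'),
      glueDist j ⟨i, x⟩ ⟨i', x'⟩ =
        ⨅ (y : Y) (y' : Y),
          edist x (j i y) + glueDist j ⟨i, j i y⟩ ⟨i', j i' y'⟩ + edist (j i' y') x' := by
  intro i i' hii' x x'
  refine (glueDist_eq_iInf_head j (a := ⟨i, x⟩) (b := ⟨i', x'⟩) hii').trans
    (iInf_congr fun y => ?_)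
  rw [glueDist_eq_iInf_last j (a := ⟨i, j i y⟩) (b := ⟨i', x'⟩) hii', ENNReal.add_iInf]
  simp only [add_assoc]
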